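/- Define, for Λ > 0, I₂(Λ) = \int_{Λ^{-1/4}}^{∞} [ (arctan u - u/(1+u²)) / (u/Λ + (8π/3)(u - arctan u)) ] · (1/u²) \, du. Then lim_{Λ → ∞} I₂(Λ)/\sqrt{Λ} = 0. -/

import Mathlib

open Real Filter MeasureTheory

/-- Large-`u` part of the ground state energy decomposition:
`I₂(Λ) = ∫_{Λ^{-1/4}}^∞ (arctan u - u/(1+u²)) / (u/Λ + (8π/3)(u - arctan u)) · u^{-2} du`. -/
noncomputable def I₂ (Λ : ℝ) : ℝ :=
  ∫ u in Set.Ici (Λ ^ (-(1 : ℝ) / 4)),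
    (Real.arctan u - u / (1 + u ^ 2)) /
      (u / Λ + 8 * π / 3 * (u - Real.arctan u)) / u ^ 2

/-!
On `u ≥ 0` the numerator `arctan u - u/(1+u²)` is nonnegative and at most `2 (u - arctan u)`
(all three functions involved vanish at `0` and have nonnegative derivatives), so the integrand
of `I₂(Λ)` lies between `0` and `(3/(4π)) u⁻²`. Integrating from `Λ^{-1/4}` gives
`0 ≤ I₂(Λ) ≤ (3/(4π)) Λ^{1/4}`, hence `I₂(Λ)/√Λ = O(Λ^{-1/4})`.
-/

open Set

namespace Real

lemma hasDerivAt_div_one_add_sq (x : ℝ) :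
    HasDerivAt (fun x : ℝ => x / (1 + x ^ 2)) ((1 - x ^ 2) / (1 + x ^ 2) ^ 2) x :=
  ((hasDerivAt_id x).div ((hasDerivAt_pow 2 x).const_add 1) (by positivity)).congr_deriv
    (by simp only [id]; ring)

lemma hasDerivAt_arctan_sub_div_one_add_sq (x : ℝ) :
    HasDerivAt (fun x : ℝ => arctan x - x / (1 + x ^ 2)) (2 * x ^ 2 / (1 + x ^ 2) ^ 2) x :=
  ((hasDerivAt_arctan x).sub (hasDerivAt_div_one_add_sq x)).congr_deriv (by field_simp; ring)

lemma monotone_arctan_sub_div_one_add_sq : Monotone fun x : ℝ => arctan x - x / (1 + x ^ 2) :=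
  monotone_of_hasDerivAt_nonneg hasDerivAt_arctan_sub_div_one_add_sq fun x => by positivity

lemma monotone_self_sub_arctan : Monotone fun x : ℝ => x - arctan x :=
  monotone_of_hasDerivAt_nonneg (f' := fun x => x ^ 2 / (1 + x ^ 2))
    (fun x => ((hasDerivAt_id x).sub (hasDerivAt_arctan x)).congr_deriv (by field_simp; ring))
    fun x => by positivity

lemma div_one_add_sq_le_arctan {x : ℝ} (hx : 0 ≤ x) : x / (1 + x ^ 2) ≤ arctan x := by
  simpa using monotone_arctan_sub_div_one_add_sq hx

lemma arctan_le_self {x : ℝ} (hx : 0 ≤ x) : arctan x ≤ x := by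
  simpa using monotone_self_sub_arctan hx

lemma arctan_sub_div_one_add_sq_le {x : ℝ} (hx : 0 ≤ x) :
    arctan x - x / (1 + x ^ 2) ≤ 2 * (x - arctan x) := by
  have hmono : Monotone fun x : ℝ => 2 * (x - arctan x) - (arctan x - x / (1 + x ^ 2)) :=
    monotone_of_hasDerivAt_nonneg (f' := fun x => 2 * x ^ 4 / (1 + x ^ 2) ^ 2)
      (fun x => ((((hasDerivAt_id x).sub (hasDerivAt_arctan x)).const_mul 2).sub
        (hasDerivAt_arctan_sub_div_one_add_sq x)).congr_deriv (by field_simp; ring))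
      fun x => by positivity
  simpa using hmono hx

end Real

lemma rpow_neg_two_eqOn_Ioi {a : ℝ} (ha : 0 ≤ a) :
    EqOn (fun u : ℝ => u ^ (-2 : ℝ)) (fun u => (u ^ 2)⁻¹) (Ioi a) := fun u hu => by
  simp [rpow_neg (ha.trans (le_of_lt hu))]

lemma integrableOn_Ioi_inv_sq {a : ℝ} (ha : 0 < a) :
    IntegrableOn (fun u : ℝ => (u ^ 2)⁻¹) (Ioi a) :=
  (integrableOn_Ioi_rpow_of_lt (by norm_num) ha).congr_fun (rpow_neg_two_eqOn_Ioi ha.le)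
    measurableSet_Ioi

lemma integral_Ioi_inv_sq {a : ℝ} (ha : 0 < a) : ∫ u in Ioi a, (u ^ 2)⁻¹ = a⁻¹ := by
  rw [← setIntegral_congr_fun measurableSet_Ioi (rpow_neg_two_eqOn_Ioi ha.le),
    integral_Ioi_rpow_of_lt (by norm_num) ha]
  norm_num [rpow_neg_one]

noncomputable def integrandI₂ (Λ u : ℝ) : ℝ :=
  (arctan u - u / (1 + u ^ 2)) / (u / Λ + 8 * π / 3 * (u - arctan u)) / u ^ 2

lemma integrandI₂_nonneg {Λ u : ℝ} (hΛ : 0 ≤ Λ) (hu : 0 ≤ u) : 0 ≤ integrandI₂ Λ u := by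
  have hN := sub_nonneg.2 (div_one_add_sq_le_arctan hu)
  have hS := sub_nonneg.2 (arctan_le_self hu)
  unfold integrandI₂
  positivity

lemma integrandI₂_le {Λ u : ℝ} (hΛ : 0 ≤ Λ) (hu : 0 ≤ u) :
    integrandI₂ Λ u ≤ 3 / (4 * π) * (u ^ 2)⁻¹ := by
  have hS := sub_nonneg.2 (arctan_le_self hu)
  have hratio :
      (arctan u - u / (1 + u ^ 2)) / (u / Λ + 8 * π / 3 * (u - arctan u)) ≤ 3 / (4 * π) := by
    refine div_le_of_le_mul₀ (by positivity) (by positivity) ?_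
    calc arctan u - u / (1 + u ^ 2) ≤ 2 * (u - arctan u) := arctan_sub_div_one_add_sq_le hu
      _ = 3 / (4 * π) * (8 * π / 3 * (u - arctan u)) := by field_simp; ring
      _ ≤ 3 / (4 * π) * (u / Λ + 8 * π / 3 * (u - arctan u)) := by
        gcongr
        exact le_add_of_nonneg_left (by positivity)
  exact (div_le_div_of_nonneg_right hratio (sq_nonneg u)).trans_eq (div_eq_mul_inv _ _)

lemma I₂_nonneg {Λ : ℝ} (hΛ : 0 ≤ Λ) : 0 ≤ I₂ Λ :=
  setIntegral_nonneg measurableSet_Ici fun _ hu =>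
    integrandI₂_nonneg hΛ ((rpow_nonneg hΛ _).trans hu)

lemma I₂_le {Λ : ℝ} (hΛ : 0 < Λ) : I₂ Λ ≤ 3 / (4 * π) * Λ ^ ((1 : ℝ) / 4) := by
  set a := Λ ^ (-(1 : ℝ) / 4) with ha_def
  have ha : 0 < a := rpow_pos_of_pos hΛ _
  have hainv : a⁻¹ = Λ ^ ((1 : ℝ) / 4) := by
    rw [ha_def, ← rpow_neg hΛ.le]
    norm_num
  calc I₂ Λ ≤ ∫ u in Ici a, 3 / (4 * π) * (u ^ 2)⁻¹ := by
        refine integral_mono_of_nonneg ?_ ?_ ?_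
        · filter_upwards [ae_restrict_mem measurableSet_Ici] with u hu
          exact integrandI₂_nonneg hΛ.le (ha.le.trans hu)
        · exact ((integrableOn_Ici_iff_integrableOn_Ioi).2 (integrableOn_Ioi_inv_sq ha)).const_mul
            _
        · filter_upwards [ae_restrict_mem measurableSet_Ici] with u hu
          exact integrandI₂_le hΛ.le (ha.le.trans hu)
    _ = 3 / (4 * π) * Λ ^ ((1 : ℝ) / 4) := by
        rw [integral_const_mul, integral_Ici_eq_integral_Ioi, integral_Ioi_inv_sq ha, hainv]

theorem I2_limit_zero :
    Tendsto (fun Λ : ℝ => I₂ Λ / Real.sqrt Λ) atTop (nhds 0) := by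
  have hbound : ∀ᶠ Λ : ℝ in atTop, I₂ Λ / √Λ ≤ 3 / (4 * π) * Λ ^ (-(1 : ℝ) / 4) := by
    filter_upwards [eventually_gt_atTop 0] with Λ hΛ
    rw [div_le_iff₀ (sqrt_pos.2 hΛ), sqrt_eq_rpow, mul_assoc, ← rpow_add hΛ,
      show -(1 : ℝ) / 4 + 1 / 2 = 1 / 4 by norm_num]
    exact I₂_le hΛ
  have hdecay : Tendsto (fun Λ : ℝ => 3 / (4 * π) * Λ ^ (-(1 : ℝ) / 4)) atTop (nhds 0) := by
    simpa [neg_div] using (tendsto_rpow_neg_atTop (y := (1 : ℝ) / 4) (by norm_num)).const_mul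
      (3 / (4 * π))
  refine squeeze_zero' ?_ hbound hdecay
  filter_upwards [eventually_ge_atTop 0] with Λ hΛ
  exact div_nonneg (I₂_nonneg hΛ) (sqrt_nonneg Λ)
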